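/- For all sufficiently small ε > 0 and all u ∈ ℝ, |f_ε'(u) - f_0'(u)| ≤ ε |u|^{2^*-2} ( (2^*-1) ln ln(e+|u|) + 1/ln(e+|u|) ), where f_ε(u) = |u|^{2^*-2} u / [ln(e+|u|)]^ε. -/
import Mathlib


open Real

/-- The derivative of `f_ε(u) = |u|^{2^*-2} u / [ln(e+|u|)]^ε`, where `2^* = 2N/(N-2)`. -/
noncomputable def fEps' (N : ℕ) (ε u : ℝ) : ℝ :=
  |u| ^ (2 * (N : ℝ) / ((N : ℝ) - 2) - 2) / (Real.log (Real.exp 1 + |u|)) ^ ε *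
    (2 * (N : ℝ) / ((N : ℝ) - 2) - 1 -
      ε * |u| / ((Real.exp 1 + |u|) * Real.log (Real.exp 1 + |u|)))

theorem stmt2 (N : ℕ) (hN : 3 ≤ N) :
    ∃ ε₀ > (0 : ℝ), ∀ ε : ℝ, 0 < ε → ε ≤ ε₀ → ∀ u : ℝ,
      |fEps' N ε u - fEps' N 0 u| ≤
        ε * |u| ^ (2 * (N : ℝ) / ((N : ℝ) - 2) - 2) *
          ((2 * (N : ℝ) / ((N : ℝ) - 2) - 1) * Real.log (Real.log (Real.exp 1 + |u|)) +
            1 / Real.log (Real.exp 1 + |u|)) := by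
  refine ⟨1, one_pos, fun ε hε hε1 u => ?_⟩
  have hN3 : (3:ℝ) ≤ (N:ℝ) := by exact_mod_cast hN
  simp only [fEps', Real.rpow_zero, zero_mul, zero_div, sub_zero, div_one]
  set p : ℝ := 2 * (N : ℝ) / ((N : ℝ) - 2) with hpdef
  set E : ℝ := Real.exp 1 + |u| with hEdef
  set L : ℝ := Real.log E with hLdef
  set A : ℝ := |u| ^ (p - 2) with hAdef
  set B : ℝ := L ^ ε with hBdef
  have hE : Real.exp 1 ≤ E := le_add_of_nonneg_right (abs_nonneg u)
  have hE0 : (0:ℝ) < E := lt_of_lt_of_le (Real.exp_pos 1) hE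
  have hL : (1:ℝ) ≤ L := by
    rw [hLdef]
    calc (1:ℝ) = Real.log (Real.exp 1) := (Real.log_exp 1).symm
    _ ≤ Real.log E := Real.log_le_log (Real.exp_pos 1) hE
  have hL0 : (0:ℝ) < L := lt_of_lt_of_le one_pos hL
  have hlogL : (0:ℝ) ≤ Real.log L := Real.log_nonneg hL
  have hA : (0:ℝ) ≤ A := Real.rpow_nonneg (abs_nonneg u) _
  have hBexp : B = Real.exp (ε * Real.log L) := by rw [hBdef, Real.rpow_def_of_pos hL0, mul_comm]
  have hB1 : (1:ℝ) ≤ B := by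
    rw [hBexp]
    calc (1:ℝ) = Real.exp 0 := Real.exp_zero.symm
    _ ≤ _ := Real.exp_le_exp.mpr (mul_nonneg hε.le hlogL)
  have hB0 : (0:ℝ) < B := lt_of_lt_of_le one_pos hB1
  have hp2 : (2:ℝ) ≤ p := by
    rw [hpdef, le_div_iff₀ (by linarith)]; linarith
  -- key bound 1 : 1 - 1/B ≤ ε * log L
  have key1 : 1 - 1/B ≤ ε * Real.log L := by
    have h := Real.add_one_le_exp (-(ε * Real.log L))
    rw [Real.exp_neg, ← hBexp] at h
    have hB' : 1 - 1/B ≤ 1 - B⁻¹ := by rw [one_div]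
    have : B⁻¹ ≥ 1 - ε * Real.log L := by linarith
    rw [one_div]; linarith
  -- key bound 2 : |u| / (E * L * B) ≤ 1 / L
  have key2 : |u| / (E * L * B) ≤ 1 / L := by
    rw [div_le_div_iff₀ (by positivity) hL0]
    have hu : |u| ≤ E := by rw [hEdef]; nlinarith [Real.exp_pos 1]
    nlinarith [mul_nonneg hL0.le (sub_nonneg.mpr hB1)]
  -- rewrite the difference
  have h1 : A / B * (p - 1 - ε * |u| / (E * L)) - A * (p - 1)
      = -((A * (p - 1) * (1 - 1/B)) + ε * A * (|u| / (E * L * B))) := by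
    field_simp
    ring
  have h1B : (0:ℝ) ≤ 1 - 1/B := sub_nonneg.mpr ((div_le_one hB0).mpr hB1)
  rw [h1, abs_neg, abs_of_nonneg (add_nonneg
    (mul_nonneg (mul_nonneg hA (by linarith)) h1B) (by positivity))]
  have hRHS : ε * A * ((p - 1) * Real.log L + 1 / L)
      = A * (p - 1) * (ε * Real.log L) + ε * A * (1 / L) := by ring
  rw [hRHS]
  gcongr
  · nlinarith
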